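/- arXiv:2212.14501 — 2 statements merged into one kernel-verified Lean document; each statement's English description precedes it below -/
import Mathlib

section
/- Let (a_m(x), b_m(x)) be the symmetric decomposition of Q_m(x). Then for all m ≥ 0: (x−1) b_{m+1}(x) = (4mx + x − 1) a_m(x) − 4x(1+x) a_m'(x) + (6mx − 4m + x − 3)(x+1) b_m(x) − 2x(1+x)^2 b_m'(x). -/
/-!
Every `Q m` has degree at most `m`, so reflection is multiplicative on the terms of the recurrence
of `Q`, which therefore yields a recurrence for `R m = X ^ m * Q m (1 / X)`: under reflection in
degree `N` the Euler operator `X * d/dX` becomes `N - X * d/dX`. Since `a m + b m = R m` and `Q m = a m + X * b m`,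
the claim `(X - 1) * b (m + 1) = Q (m + 1) - R (m + 1)` is then a polynomial identity in
`a m`, `b m` and their derivatives.
-/

open Polynomial

namespace Polynomial

variable {R : Type*} [CommRing R]

theorem X_mul_derivative_C_mul_X_pow (c : R) (n : ℕ) :
    X * derivative (C c * X ^ n) = C (c * n) * X ^ n := by
  rcases n with _ | n
  · simp
  · rw [derivative_C_mul_X_pow, Nat.add_sub_cancel, pow_succ]
    ring

theorem natDegree_X_mul_derivative_le (p : R[X]) : (X * derivative p).natDegree ≤ p.natDegree := by
  refine natDegree_le_iff_coeff_eq_zero.mpr fun i hi => ?_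
  obtain ⟨j, rfl⟩ : ∃ j, i = j + 1 := ⟨i - 1, by omega⟩
  rw [coeff_X_mul, coeff_derivative, coeff_eq_zero_of_natDegree_lt hi, zero_mul]

theorem reflect_X_mul_derivative {N : ℕ} {p : R[X]} (hp : p.natDegree ≤ N) :
    reflect N (X * derivative p) = (N : R[X]) * reflect N p - X * derivative (reflect N p) := by
  refine induction_with_natDegree_le
    (fun p => reflect N (X * derivative p) = (N : R[X]) * reflect N p - X * derivative (reflect N p))
    N (by simp) (fun n r _ hn => ?_) (fun f g _ _ hf hg => ?_) p hp
  · obtain ⟨k, rfl⟩ : ∃ k, N = n + k := ⟨N - n, by omega⟩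
    rw [X_mul_derivative_C_mul_X_pow, reflect_C_mul_X_pow, revAt_le hn, Nat.add_sub_cancel_left,
      reflect_C_mul_X_pow, revAt_le hn, Nat.add_sub_cancel_left, X_mul_derivative_C_mul_X_pow]
    simp only [map_mul, map_natCast, Nat.cast_add]
    ring
  · simp only [derivative_add, mul_add, reflect_add, hf, hg]
    ring

theorem reflect_one_C_add_C_mul_X (a b : R) : reflect 1 (C a + C b * X) = C b + C a * X := by
  rw [reflect_add, reflect_C, ← pow_one X, reflect_C_mul_X_pow, revAt_le le_rfl]
  simp [add_comm]

end Polynomial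

section Recurrence

variable {R : Type*} [CommRing R] {Q : ℕ → R[X]}

theorem natDegree_le_of_recurrence (h0 : Q 0 = 1)
    (hrec : ∀ m : ℕ, Q (m + 1) =
      (2 * (m : R[X]) + 1) * (2 + 3 * X) * Q m - 2 * X * (1 + X) * derivative (Q m))
    (m : ℕ) : (Q m).natDegree ≤ m := by
  induction m with
  | zero => simp [h0]
  | succ m ih =>
    rw [hrec m, show 2 * X * (1 + X) * derivative (Q m) = 2 * (1 + X) * (X * derivative (Q m)) by ring]
    refine natDegree_sub_le_of_le (natDegree_mul_le_of_le (by compute_degree) ih)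
      (natDegree_mul_le_of_le (by compute_degree) ((natDegree_X_mul_derivative_le _).trans ih)) |>.trans ?_
    omega

theorem reflect_of_recurrence (h0 : Q 0 = 1)
    (hrec : ∀ m : ℕ, Q (m + 1) =
      (2 * (m : R[X]) + 1) * (2 + 3 * X) * Q m - 2 * X * (1 + X) * derivative (Q m))
    (m : ℕ) : reflect (m + 1) (Q (m + 1)) =
      (2 * (m : R[X]) + 1) * (3 + 2 * X) * reflect m (Q m)
        - 2 * (X + 1) * ((m : R[X]) * reflect m (Q m) - X * derivative (reflect m (Q m))) := by
  have hdeg := natDegree_le_of_recurrence h0 hrec m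
  have hA : (2 * (m : R[X]) + 1) * (2 + 3 * X) =
      C (2 * (2 * (m : R) + 1)) + C (3 * (2 * (m : R) + 1)) * X := by
    simp only [map_mul, map_add, map_ofNat, map_natCast, map_one]; ring
  have hB : 2 * (1 + X : R[X]) = C 2 + C 2 * X := by
    simp only [map_ofNat]; ring
  rw [hrec m, show 2 * X * (1 + X) * derivative (Q m) = 2 * (1 + X) * (X * derivative (Q m)) by ring,
    hA, hB, reflect_sub, add_comm m 1,
    reflect_mul _ _ (by compute_degree) hdeg, reflect_mul _ _ (by compute_degree)
      ((natDegree_X_mul_derivative_le _).trans hdeg),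
    reflect_one_C_add_C_mul_X, reflect_one_C_add_C_mul_X, reflect_X_mul_derivative hdeg]
  simp only [map_mul, map_add, map_ofNat, map_natCast, map_one]
  ring

end Recurrence

theorem symmetric_decomposition {R : Type*} [CommRing R] {q r a b : R[X]}
    (ha : (1 - X) * a = q - X * r) (hb : (X - 1) * b = q - r) : a + b = r ∧ q = a + X * b := by
  have hab : a + b = r := (monic_X_sub_C (1 : R)).isRegular.left <| by
    simp only [map_one]; linear_combination hb - ha
  exact ⟨hab, by linear_combination -hb - hab⟩

theorem b_recurrence (Q a b : ℕ → Polynomial ℝ) (h0 : Q 0 = 1)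
    (hrec : ∀ m : ℕ, Q (m + 1) =
      (2 * (m : Polynomial ℝ) + 1) * (2 + 3 * Polynomial.X) * Q m
        - 2 * Polynomial.X * (1 + Polynomial.X) * Polynomial.derivative (Q m))
    (ha : ∀ m : ℕ, (1 - Polynomial.X) * a m = Q m - Polynomial.X * Polynomial.reflect m (Q m))
    (hb : ∀ m : ℕ, (Polynomial.X - 1) * b m = Q m - Polynomial.reflect m (Q m)) :
    ∀ m : ℕ, (Polynomial.X - 1) * b (m + 1) =
      (4 * (m : Polynomial ℝ) * Polynomial.X + Polynomial.X - 1) * a m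
        - 4 * Polynomial.X * (1 + Polynomial.X) * Polynomial.derivative (a m)
        + (6 * (m : Polynomial ℝ) * Polynomial.X - 4 * (m : Polynomial ℝ) + Polynomial.X - 3) *
            (Polynomial.X + 1) * b m
        - 2 * Polynomial.X * (1 + Polynomial.X) ^ 2 * Polynomial.derivative (b m) := by
  intro m
  obtain ⟨hreflect, hQ⟩ := symmetric_decomposition (ha m) (hb m)
  rw [hb (m + 1), reflect_of_recurrence h0 hrec m, hrec m, ← hreflect, hQ]
  simp only [derivative_add, derivative_mul, derivative_X]
  ring
end

section
/- For all m ≥ 1 and 0 ≤ k ≤ ⌊m/2⌋, the γ-coefficient α_{m,k} of a_m satisfies (−1)^k α_{m,k} > 0, and for 0 ≤ k ≤ ⌊(m−1)/2⌋ the γ-coefficient β_{m,k} of b_m satisfies (−1)^k β_{m,k} > 0. In other words, both a_m and b_m are alternatingly γ-positive. -/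
/-!
Write `Q_m = A_m + X B_m` with `A_m = ∑ α'_k X^k (1+X)^(m-2k)` and
`B_m = ∑ β'_k X^k (1+X)^(m-1-2k)`. The operator `p ↦ (2m+1)(2+3X) p - 2X(1+X) p'` sends
`X^k (1+X)^(m-2k)` and `X^(k+1) (1+X)^(m-1-2k)` to explicit combinations of the same kind of
polynomials one degree higher, so the γ-vectors obey
`α'_0 ↦ (4m+2) α'_0`, `α'_{k+1} ↦ (4m-2k) α'_{k+1} - (4k+3) β'_k`,
`β'_k ↦ (4k+1) α'_k + (4m+2k+3) β'_k`,
and every coefficient has the sign that propagates `(-1)^k α'_k > 0`, `(-1)^k β'_k > 0`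
(`4m-2k` is positive whenever `α'_{k+1} ≠ 0`, as `α'_{k+1}` vanishes unless `2k+2 ≤ m`).
Since `A_m` and `B_m` are palindromic of degrees `m` and `m-1`, uniqueness of the symmetric
decomposition gives `a_m = A_m`, `b_m = B_m`, and uniqueness of γ-expansions gives `α = α'`,
`β = β'`.
-/

open Polynomial Finset

lemma sum_range_succ_eq_sum_shift {M : Type*} [AddCommMonoid M] (f : ℕ → M) (n : ℕ)
    (h : f (n + 1) = 0) :
    ∑ k ∈ range (n + 1), f k = ∑ k ∈ range (n + 1), f (k + 1) + f 0 := by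
  rw [← sum_range_succ', sum_range_succ f (n + 1), h, add_zero]

section GammaExpansion

variable {R : Type*} [CommRing R]

lemma reflect_smul (N : ℕ) (r : R) (p : R[X]) : reflect N (r • p) = r • reflect N p := by
  rw [← C_mul', reflect_C_mul, C_mul']

lemma reflect_succ_X_mul {n : ℕ} {p : R[X]} (hp : p.natDegree ≤ n) :
    reflect (n + 1) (X * p) = reflect n p := by
  rw [add_comm, reflect_mul _ _ natDegree_X_le hp, reflect_one_X, one_mul]

lemma reflect_one_add_X_pow (e : ℕ) : reflect e ((1 + X : R[X]) ^ e) = (1 + X) ^ e := by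
  ext i
  rw [coeff_reflect, coeff_one_add_X_pow, coeff_one_add_X_pow]
  rcases le_or_gt i e with h | h
  · rw [revAt_le h, Nat.choose_symm h]
  · rw [revAt_eq_self_of_lt h]

lemma natDegree_one_add_X_pow_le (e : ℕ) : ((1 + X : R[X]) ^ e).natDegree ≤ e := by
  have h : (1 + X : R[X]).natDegree ≤ 1 :=
    natDegree_add_le_of_degree_le (natDegree_one.trans_le zero_le_one) natDegree_X_le
  simpa using natDegree_pow_le_of_le e h

lemma symmetric_decomposition_unique {n : ℕ} {p a b a' b' : R[X]}
    (ha : (1 - X) * a = p - X * reflect n p) (hb : (X - 1) * b = p - reflect n p)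
    (hp : p = a' + X * b') (ha' : reflect n a' = a') (hb' : reflect n (X * b') = b') :
    a = a' ∧ b = b' := by
  have hreg : IsLeftRegular (X - 1 : R[X]) := by
    simpa using (monic_X_sub_C (1 : R)).isRegular.left
  have hr : reflect n p = a' + b' := by rw [hp, reflect_add, ha', hb']
  exact ⟨hreg (by linear_combination (-1 : R[X]) * ha - hp + X * hr),
    hreg (by linear_combination hb + hp - hr)⟩

lemma eq_zero_of_sum_smul_X_pow_mul_eq_zero {N : ℕ} {c : ℕ → R} {p : ℕ → R[X]}
    (hp : ∀ k, (p k).coeff 0 = 1) (h : ∑ k ∈ range N, c k • (X ^ k * p k) = 0) :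
    ∀ k < N, c k = 0 := by
  intro k
  induction k using Nat.strong_induction_on with
  | _ k ih =>
    intro hk
    have hcoeff := congrArg (coeff · k) h
    simp only [finsetSum_coeff, coeff_smul, coeff_X_pow_mul', coeff_zero] at hcoeff
    rwa [sum_eq_single_of_mem k (mem_range.2 hk) fun j hj hjk => ?_, if_pos le_rfl, Nat.sub_self,
      hp, smul_eq_mul, mul_one] at hcoeff
    split_ifs with hjk_le
    · rw [ih j (by omega) (mem_range.1 hj), zero_smul]
    · rw [smul_zero]

noncomputable def gammaBasis (n k : ℕ) : R[X] := X ^ k * (1 + X) ^ (n - 2 * k)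

noncomputable def gammaExpand (n : ℕ) (c : ℕ → R) : R[X] :=
  ∑ k ∈ range (n / 2 + 1), c k • gammaBasis n k

lemma gammaExpand_eq_sum_C_mul (n : ℕ) (c : ℕ → R) :
    gammaExpand n c = ∑ k ∈ range (n / 2 + 1), C (c k) * X ^ k * (1 + X) ^ (n - 2 * k) := by
  refine sum_congr rfl fun k _ => ?_
  rw [mul_assoc, C_mul', gammaBasis]

lemma gammaExpand_eq_sum_range {n N : ℕ} {c : ℕ → R} (hN : n / 2 < N)
    (hc : ∀ k, n < 2 * k → c k = 0) :
    gammaExpand n c = ∑ k ∈ range N, c k • gammaBasis n k := by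
  refine sum_subset (range_subset_range.2 hN) fun k _ hk => ?_
  rw [hc k (by simp at hk; omega), zero_smul]

lemma natDegree_gammaBasis_le {n k : ℕ} (h : 2 * k ≤ n) :
    (gammaBasis n k : R[X]).natDegree ≤ n := by
  have h₁ := natDegree_X_pow_le (R := R) k
  have h₂ := natDegree_one_add_X_pow_le (R := R) (n - 2 * k)
  exact natDegree_mul_le.trans (by omega)

lemma reflect_gammaBasis {n k : ℕ} (h : 2 * k ≤ n) :
    reflect n (gammaBasis n k : R[X]) = gammaBasis n k := by
  obtain ⟨e, rfl⟩ := Nat.exists_eq_add_of_le h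
  rw [gammaBasis, Nat.add_sub_cancel_left,
    reflect_mul _ _ ((natDegree_X_pow_le k).trans (by omega)) (natDegree_one_add_X_pow_le e),
    reflect_monomial, reflect_one_add_X_pow, revAt_le (by omega)]
  congr 2
  omega

lemma natDegree_gammaExpand_le (n : ℕ) (c : ℕ → R) : (gammaExpand n c).natDegree ≤ n :=
  natDegree_sum_le_of_forall_le _ _ fun k hk =>
    (natDegree_smul_le _ _).trans (natDegree_gammaBasis_le (by simp at hk; omega))

lemma reflect_gammaExpand (n : ℕ) (c : ℕ → R) :
    reflect n (gammaExpand n c) = gammaExpand n c := by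
  refine sum_induction _ (fun p => reflect n p = p) (fun p q hp hq => by rw [reflect_add, hp, hq])
    reflect_zero fun k hk => ?_
  rw [reflect_smul, reflect_gammaBasis (by simp at hk; omega)]

lemma eq_of_gammaExpand_eq {n : ℕ} {c d : ℕ → R} (h : gammaExpand n c = gammaExpand n d)
    {k : ℕ} (hk : k ≤ n / 2) : c k = d k := by
  refine sub_eq_zero.1 (eq_zero_of_sum_smul_X_pow_mul_eq_zero (N := n / 2 + 1) (c := c - d)
    (p := fun k => (1 + X) ^ (n - 2 * k)) (by simp [coeff_one_add_X_pow]) ?_ k (by omega))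
  simpa only [Pi.sub_apply, sub_smul, sum_sub_distrib, sub_eq_zero, gammaExpand, gammaBasis]
    using h

noncomputable def qStep (m : ℕ) : R[X] →ₗ[R] R[X] :=
  LinearMap.mulLeft R ((2 * (m : R[X]) + 1) * (2 + 3 * X)) -
    LinearMap.mulLeft R (2 * X * (1 + X)) ∘ₗ derivative

lemma qStep_apply (m : ℕ) (p : R[X]) :
    qStep m p = (2 * (m : R[X]) + 1) * (2 + 3 * X) * p - 2 * X * (1 + X) * derivative p :=
  rfl

lemma X_mul_derivative_X_pow (j : ℕ) : X * derivative (X ^ j : R[X]) = C (j : R) * X ^ j := by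
  rw [derivative_X_pow]
  rcases j with _ | j
  · simp
  · rw [Nat.add_sub_cancel, mul_left_comm, ← pow_succ']

lemma one_add_X_mul_derivative_one_add_X_pow (e : ℕ) :
    (1 + X) * derivative ((1 + X : R[X]) ^ e) = C (e : R) * (1 + X) ^ e := by
  rw [derivative_pow, derivative_add, derivative_one, derivative_X, zero_add, mul_one]
  rcases e with _ | e
  · simp
  · rw [Nat.add_sub_cancel, mul_left_comm, ← pow_succ']

lemma qStep_X_pow_mul_one_add_X_pow (m j e : ℕ) :
    qStep m (X ^ j * (1 + X) ^ e : R[X]) =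
      (4 * m + 2 - 2 * j : R) • (X ^ j * (1 + X) ^ (e + 1)) +
        (2 * m + 1 - 2 * e : R) • (X ^ (j + 1) * (1 + X) ^ e) := by
  have hd : 2 * X * (1 + X) * derivative (X ^ j * (1 + X) ^ e : R[X]) =
      2 * (1 + X) * (1 + X) ^ e * (X * derivative (X ^ j)) +
        2 * X * X ^ j * ((1 + X) * derivative ((1 + X) ^ e)) := by
    rw [derivative_mul]
    ring
  rw [qStep_apply, hd, X_mul_derivative_X_pow, one_add_X_mul_derivative_one_add_X_pow,
    ← C_mul', ← C_mul']
  simp only [map_sub, map_add, map_mul, map_one, map_ofNat, map_natCast]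
  ring

lemma qStep_gammaBasis {m k : ℕ} (h : 2 * k ≤ m) :
    qStep m (gammaBasis m k : R[X]) =
      (4 * m + 2 - 2 * k : R) • gammaBasis (m + 1) k +
        (4 * k + 1 : R) • (X * gammaBasis m k) := by
  obtain ⟨e, rfl⟩ := Nat.exists_eq_add_of_le h
  simp only [gammaBasis, Nat.add_sub_cancel_left, show 2 * k + e + 1 - 2 * k = e + 1 by omega,
    qStep_X_pow_mul_one_add_X_pow, ← C_mul', map_add, map_sub, map_mul, map_natCast, map_ofNat,
    map_one, Nat.cast_add, Nat.cast_mul, Nat.cast_ofNat]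
  ring

lemma qStep_X_mul_gammaBasis {m k : ℕ} (h : 2 * k + 1 ≤ m) :
    qStep m (X * gammaBasis (m - 1) k : R[X]) =
      (4 * m + 2 * k + 3 : R) • (X * gammaBasis m k) -
        (4 * k + 3 : R) • gammaBasis (m + 1) (k + 1) := by
  obtain ⟨e, rfl⟩ := Nat.exists_eq_add_of_le h
  simp only [gammaBasis, show 2 * k + 1 + e - 1 - 2 * k = e by omega,
    show 2 * k + 1 + e - 2 * k = e + 1 by omega, show 2 * k + 1 + e + 1 - 2 * (k + 1) = e by omega,
    ← mul_assoc, ← pow_succ', qStep_X_pow_mul_one_add_X_pow, ← C_mul', map_add, map_sub, map_mul,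
    map_natCast, map_ofNat, map_one, Nat.cast_add, Nat.cast_mul, Nat.cast_ofNat, Nat.cast_one]
  ring

end GammaExpansion

/-- `(gammaCoeffs m).1` and `(gammaCoeffs m).2` are the γ-vectors `α'` and `β'` of the header. -/
noncomputable def gammaCoeffs : ℕ → (ℕ → ℝ) × (ℕ → ℝ)
  | 0 => (fun k => if k = 0 then 1 else 0, fun _ => 0)
  | m + 1 =>
    (fun k => match k with
      | 0 => (4 * m + 2) * (gammaCoeffs m).1 0
      | k + 1 =>
        (4 * m - 2 * k) * (gammaCoeffs m).1 (k + 1) - (4 * k + 3) * (gammaCoeffs m).2 k,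
     fun k => (4 * k + 1) * (gammaCoeffs m).1 k + (4 * m + 2 * k + 3) * (gammaCoeffs m).2 k)

noncomputable def gammaA (m k : ℕ) : ℝ := (gammaCoeffs m).1 k

noncomputable def gammaB (m k : ℕ) : ℝ := (gammaCoeffs m).2 k

lemma gammaA_zero (k : ℕ) : gammaA 0 k = if k = 0 then 1 else 0 := rfl

lemma gammaB_zero (k : ℕ) : gammaB 0 k = 0 := rfl

lemma gammaA_succ_zero (m : ℕ) : gammaA (m + 1) 0 = (4 * m + 2) * gammaA m 0 := rfl

lemma gammaA_succ_succ (m k : ℕ) :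
    gammaA (m + 1) (k + 1) = (4 * m - 2 * k) * gammaA m (k + 1) - (4 * k + 3) * gammaB m k :=
  rfl

lemma gammaB_succ (m k : ℕ) :
    gammaB (m + 1) k = (4 * k + 1) * gammaA m k + (4 * m + 2 * k + 3) * gammaB m k := rfl

lemma gammaA_eq_zero_and_gammaB_eq_zero (m : ℕ) :
    (∀ k, m < 2 * k → gammaA m k = 0) ∧ (∀ k, m ≤ 2 * k → gammaB m k = 0) := by
  induction m with
  | zero => exact ⟨fun k hk => if_neg (by omega), fun k _ => rfl⟩
  | succ m ih =>
    refine ⟨fun k hk => ?_, fun k hk => ?_⟩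
    · obtain _ | k := k
      · omega
      rw [gammaA_succ_succ, ih.1 (k + 1) (by omega), ih.2 k (by omega)]
      ring
    · rw [gammaB_succ, ih.1 k (by omega), ih.2 k (by omega)]
      ring

lemma gammaA_eq_zero {m k : ℕ} (h : m < 2 * k) : gammaA m k = 0 :=
  (gammaA_eq_zero_and_gammaB_eq_zero m).1 k h

lemma gammaB_eq_zero {m k : ℕ} (h : m ≤ 2 * k) : gammaB m k = 0 :=
  (gammaA_eq_zero_and_gammaB_eq_zero m).2 k h

lemma neg_one_pow_mul_gammaA_pos_and_gammaB_pos (m : ℕ) :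
    (∀ k, 2 * k ≤ m → 0 < (-1 : ℝ) ^ k * gammaA m k) ∧
      (∀ k, 2 * k + 1 ≤ m → 0 < (-1 : ℝ) ^ k * gammaB m k) := by
  induction m with
  | zero =>
    refine ⟨fun k hk => ?_, fun k hk => by omega⟩
    obtain rfl : k = 0 := by omega
    simp [gammaA_zero]
  | succ m ih =>
    refine ⟨fun k hk => ?_, fun k hk => ?_⟩
    · obtain _ | k := k
      · simpa [gammaA_succ_zero] using mul_pos (by positivity) (ih.1 0 (by omega))
      have hA : 0 ≤ (4 * m - 2 * k : ℝ) * ((-1) ^ (k + 1) * gammaA m (k + 1)) := by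
        rcases le_or_gt (2 * (k + 1)) m with h | h
        · have : (2 * k + 2 : ℝ) ≤ m := by exact_mod_cast h
          exact mul_nonneg (by linarith) (ih.1 _ h).le
        · simp [gammaA_eq_zero h]
      calc (0 : ℝ) < (4 * m - 2 * k) * ((-1) ^ (k + 1) * gammaA m (k + 1))
            + (4 * k + 3) * ((-1) ^ k * gammaB m k) :=
            add_pos_of_nonneg_of_pos hA (mul_pos (by positivity) (ih.2 k (by omega)))
        _ = (-1) ^ (k + 1) * gammaA (m + 1) (k + 1) := by rw [gammaA_succ_succ]; ring
    · have hB : 0 ≤ (4 * m + 2 * k + 3 : ℝ) * ((-1) ^ k * gammaB m k) := by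
        rcases lt_or_ge (2 * k) m with h | h
        · exact mul_nonneg (by positivity) (ih.2 k h).le
        · simp [gammaB_eq_zero h]
      calc (0 : ℝ) < (4 * k + 1) * ((-1) ^ k * gammaA m k)
            + (4 * m + 2 * k + 3) * ((-1) ^ k * gammaB m k) :=
            add_pos_of_pos_of_nonneg (mul_pos (by positivity) (ih.1 k (by omega))) hB
        _ = (-1) ^ k * gammaB (m + 1) k := by rw [gammaB_succ]; ring

noncomputable def gammaPoly (m : ℕ) : ℝ[X] :=
  gammaExpand m (gammaA m) + X * gammaExpand (m - 1) (gammaB m)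

lemma gammaPoly_zero : gammaPoly 0 = 1 := by
  simp [gammaPoly, gammaExpand, gammaBasis, gammaA_zero, gammaB_zero]

lemma qStep_gammaPoly_eq_sum (m : ℕ) :
    qStep m (gammaPoly m) = ∑ k ∈ range (m + 1),
      (gammaA m k • ((4 * m + 2 - 2 * k : ℝ) • gammaBasis (m + 1) k +
          (4 * k + 1 : ℝ) • (X * gammaBasis m k)) +
        gammaB m k • ((4 * m + 2 * k + 3 : ℝ) • (X * gammaBasis m k) -
          (4 * k + 3 : ℝ) • gammaBasis (m + 1) (k + 1))) := by
  rw [gammaPoly, gammaExpand_eq_sum_range (N := m + 1) (by omega) fun k hk => gammaA_eq_zero hk,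
    gammaExpand_eq_sum_range (N := m + 1) (by omega) fun k hk => gammaB_eq_zero (by omega),
    mul_sum, ← sum_add_distrib, map_sum]
  refine sum_congr rfl fun k _ => ?_
  rw [mul_smul_comm, map_add, map_smul, map_smul]
  congr 1
  · rcases le_or_gt (2 * k) m with h | h
    · rw [qStep_gammaBasis h]
    · simp [gammaA_eq_zero h]
  · rcases lt_or_ge (2 * k) m with h | h
    · rw [qStep_X_mul_gammaBasis h]
    · simp [gammaB_eq_zero h]

lemma gammaExpand_succ_gammaA (m : ℕ) :
    gammaExpand (m + 1) (gammaA (m + 1)) =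
      ∑ k ∈ range (m + 1), ((4 * m + 2 - 2 * k) * gammaA m k) • (gammaBasis (m + 1) k : ℝ[X]) -
        ∑ k ∈ range (m + 1), ((4 * k + 3) * gammaB m k) • gammaBasis (m + 1) (k + 1) := by
  rw [gammaExpand_eq_sum_range (N := m + 2) (by omega) fun k hk => gammaA_eq_zero hk,
    sum_range_succ',
    sum_range_succ_eq_sum_shift
      (fun k : ℕ => ((4 * m + 2 - 2 * k : ℝ) * gammaA m k) • (gammaBasis (m + 1) k : ℝ[X])) m
      (by rw [gammaA_eq_zero (by omega), mul_zero, zero_smul]),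
    add_sub_right_comm, ← sum_sub_distrib]
  congr 1
  · refine sum_congr rfl fun k _ => ?_
    rw [gammaA_succ_succ, ← sub_smul]
    congr 1
    push_cast
    ring
  · simp [gammaA_succ_zero]

lemma X_mul_gammaExpand_gammaB_succ (m : ℕ) :
    X * gammaExpand m (gammaB (m + 1)) =
      ∑ k ∈ range (m + 1), gammaB (m + 1) k • (X * gammaBasis m k) := by
  rw [gammaExpand_eq_sum_range (N := m + 1) (by omega) fun k hk => gammaB_eq_zero (by omega),
    mul_sum]
  simp_rw [mul_smul_comm]

lemma qStep_gammaPoly (m : ℕ) : qStep m (gammaPoly m) = gammaPoly (m + 1) := by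
  rw [qStep_gammaPoly_eq_sum, gammaPoly, Nat.add_sub_cancel, gammaExpand_succ_gammaA,
    X_mul_gammaExpand_gammaB_succ, ← sum_sub_distrib, ← sum_add_distrib]
  refine sum_congr rfl fun k _ => ?_
  rw [gammaB_succ]
  module

theorem alternating_gamma_positivity (Q a b : ℕ → Polynomial ℝ) (α β : ℕ → ℕ → ℝ)
    (h0 : Q 0 = 1)
    (hrec : ∀ m : ℕ, Q (m + 1) =
      (2 * (m : Polynomial ℝ) + 1) * (2 + 3 * Polynomial.X) * Q m
        - 2 * Polynomial.X * (1 + Polynomial.X) * Polynomial.derivative (Q m))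
    (ha : ∀ m : ℕ, (1 - Polynomial.X) * a m = Q m - Polynomial.X * Polynomial.reflect m (Q m))
    (hb : ∀ m : ℕ, (Polynomial.X - 1) * b m = Q m - Polynomial.reflect m (Q m))
    (haexp : ∀ m : ℕ, a m = ∑ k ∈ Finset.range (m / 2 + 1),
      Polynomial.C (α m k) * Polynomial.X ^ k * (1 + Polynomial.X) ^ (m - 2 * k))
    (hbexp : ∀ m : ℕ, b m = ∑ k ∈ Finset.range ((m - 1) / 2 + 1),
      Polynomial.C (β m k) * Polynomial.X ^ k * (1 + Polynomial.X) ^ (m - 1 - 2 * k)) :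
    ∀ m : ℕ, 1 ≤ m →
      (∀ k ≤ m / 2, 0 < (-1 : ℝ) ^ k * α m k) ∧
      (∀ k ≤ (m - 1) / 2, 0 < (-1 : ℝ) ^ k * β m k) := by
  have hQ : ∀ m, Q m = gammaPoly m := by
    intro m
    induction m with
    | zero => rw [h0, gammaPoly_zero]
    | succ m ih => rw [hrec, ih, ← qStep_gammaPoly, qStep_apply]
  intro m hm
  obtain ⟨n, rfl⟩ : ∃ n, m = n + 1 := ⟨m - 1, by omega⟩
  obtain ⟨hα, hβ⟩ := symmetric_decomposition_unique (ha (n + 1)) (hb (n + 1)) (hQ (n + 1))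
    (reflect_gammaExpand _ _)
    (by rw [Nat.add_sub_cancel, reflect_succ_X_mul (natDegree_gammaExpand_le _ _),
      reflect_gammaExpand])
  rw [haexp, ← gammaExpand_eq_sum_C_mul] at hα
  rw [hbexp, ← gammaExpand_eq_sum_C_mul] at hβ
  refine ⟨fun k hk => ?_, fun k hk => ?_⟩
  · rw [eq_of_gammaExpand_eq hα hk]
    exact (neg_one_pow_mul_gammaA_pos_and_gammaB_pos (n + 1)).1 k (by omega)
  · rw [eq_of_gammaExpand_eq hβ hk]
    exact (neg_one_pow_mul_gammaA_pos_and_gammaB_pos (n + 1)).2 k (by omega)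
end
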